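/- Let C_1, C_2 be linear codes in F_q^N of dimensions k, l with dim(C_1 ∩ C_2) = s. Then the 2-tuple Hamming weight enumerator decomposes as W^{[2]}_{C_1,C_2}(X,Y) = X^N + (q-1)(W^{(1)}_{C_1}(X,Y) + W^{(1)}_{C_2}(X,Y)) + (q-1)^2 W^{(1)}_{C_1∩C_2}(X,Y) + (q^2-1)(q^2-q) W^{(2)}_{C_1∩C_2}(X,Y) + q(q-1)^2 (W^{(2)}_{C_1\setminus C_2}(X,Y) + W^{(2)}_{C_2\setminus C_1}(X,Y)) + (q-1)^2 W^{(2)}_{⟨C_1,C_2⟩\setminus(C_1∪C_2)}(X,Y). -/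

import Mathlib

open Finset
open scoped Classical BigOperators

variable {Fq : Type} [Field Fq] [Fintype Fq]

noncomputable def wt {N : ℕ} (c : Fin N → Fq) : ℕ := (Finset.univ.filter fun j => c j ≠ 0).card

def dualCode {N : ℕ} (C : Submodule Fq (Fin N → Fq)) : Submodule Fq (Fin N → Fq) where
  carrier := {v | ∀ u ∈ C, ∑ j, u j * v j = 0}
  add_mem' := by
    intro a b ha hb u hu
    have h1 := ha u hu
    have h2 := hb u hu
    have : ∀ j, u j * (a + b) j = u j * a j + u j * b j := fun j => by
      simp [Pi.add_apply, mul_add]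
    simp only [Set.mem_setOf_eq, this, Finset.sum_add_distrib, h1, h2, add_zero]
  zero_mem' := by intro u hu; simp
  smul_mem' := by
    intro r v hv u hu
    have h := hv u hu
    have : ∀ j, u j * (r • v) j = r * (u j * v j) := fun j => by
      simp [Pi.smul_apply, smul_eq_mul]; ring
    simp only [Set.mem_setOf_eq, this, ← Finset.mul_sum, h, mul_zero]

noncomputable def W {N : ℕ} (C : Submodule Fq (Fin N → Fq)) (X Y : ℂ) : ℂ :=
  ∑ c : C, X ^ (N - wt (c : Fin N → Fq)) * Y ^ wt (c : Fin N → Fq)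

noncomputable def effLen {N m : ℕ} (c : Fin m → Fin N → Fq) : ℕ :=
  (Finset.univ.filter fun j => ∃ i, c i j ≠ 0).card

noncomputable def Wm {N m : ℕ} (Cs : Fin m → Submodule Fq (Fin N → Fq)) (X Y : ℂ) : ℂ :=
  ∑ c : (Π i, Cs i), X ^ (N - effLen fun i => (c i : Fin N → Fq)) *
    Y ^ effLen (fun i => (c i : Fin N → Fq))

noncomputable def suppWt {N : ℕ} (V : Submodule Fq (Fin N → Fq)) : ℕ :=
  (Finset.univ.filter fun j => ∃ v ∈ V, v j ≠ 0).card

noncomputable def Wr {N : ℕ} (C : Submodule Fq (Fin N → Fq)) (r : ℕ) (X Y : ℂ) : ℂ :=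
  ∑ᶠ D ∈ {D : Submodule Fq (Fin N → Fq) | D ≤ C ∧ Module.finrank Fq D = r},
    X ^ (N - suppWt D) * Y ^ suppWt D

/-!
Group the pairs `(c¹, c²) ∈ C₁ × C₂` by the subspace `D = ⟨c¹, c²⟩` they span. The set of
positions where the pair is nonzero is the support of `D`, so
`W^{[2]} = ∑_D n(D) X^{N - |D|} Y^{|D|}`, where `n(D)` counts the pairs spanning `D`. Only
subspaces of dimension at most two occur, and `n(D)` depends only on the dimensions `d₁`, `d₂`, `e`
of `D ⊓ C₁`, `D ⊓ C₂`, `D ⊓ C₁ ⊓ C₂`: it is `q^(d₁ + d₂) - 1` for a line and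
`(q^d₁ - 1)(q^d₂ - 1) - (q^e - 1)(q - 1)` for a plane. Sorting the subspaces `D` by these
dimensions gives the terms of the decomposition.
-/

open Module Submodule

lemma finsum_mem_setOf_eq_sum_boole_mul {α M : Type*} [Fintype α] [Semiring M] (P : α → Prop)
    [DecidablePred P] (f : α → M) :
    ∑ᶠ x ∈ {x | P x}, f x = ∑ x, (if P x then 1 else 0) * f x := by
  rw [finsum_mem_def, finsum_eq_sum_of_fintype]
  simp [Set.indicator_apply]

section LinearAlgebra

variable {K V : Type*} [Field K] [AddCommGroup V] [Module K V]

lemma finrank_span_pair_le (a b : V) : finrank K (span K {a, b}) ≤ 2 := by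
  have h := (finrank_span_finset_le_card (R := K) ({a, b} : Finset V)).trans card_le_two
  rwa [coe_insert, coe_singleton] at h

variable [FiniteDimensional K V]

lemma le_iff_finrank_inf_eq {D C : Submodule K V} :
    D ≤ C ↔ finrank K ↥(D ⊓ C) = finrank K D := by
  refine ⟨fun h => by rw [inf_eq_left.mpr h], fun h => ?_⟩
  rw [← eq_of_le_of_finrank_eq inf_le_left h]
  exact inf_le_right

lemma span_pair_eq_iff_of_finrank_eq_one {D : Submodule K V}
    (hD : finrank K D = 1) {a b : V} :
    span K {a, b} = D ↔ a ∈ D ∧ b ∈ D ∧ (a, b) ≠ 0 := by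
  have hspan_le : span K {a, b} ≤ D ↔ a ∈ D ∧ b ∈ D := by
    simp [span_le, Set.insert_subset_iff]
  have hspan_bot : span K {a, b} = ⊥ ↔ (a, b) = 0 := by simp [span_eq_bot]
  constructor
  · rintro rfl
    refine ⟨hspan_le.mp le_rfl |>.1, hspan_le.mp le_rfl |>.2, fun h => ?_⟩
    rw [hspan_bot.mpr h, finrank_bot] at hD
    exact zero_ne_one hD
  · rintro ⟨ha, hb, hab⟩
    refine eq_of_le_of_finrank_le (hspan_le.mpr ⟨ha, hb⟩) ?_
    rw [hD, Nat.one_le_iff_ne_zero, Ne, Submodule.finrank_eq_zero, hspan_bot]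
    exact hab

lemma span_pair_eq_iff_of_finrank_eq_two {D : Submodule K V} (hD : finrank K D = 2) {a b : V} :
    span K {a, b} = D ↔ a ∈ D ∧ b ∈ D ∧ a ≠ 0 ∧ b ∉ K ∙ a := by
  have hspan_le : span K {a, b} ≤ D ↔ a ∈ D ∧ b ∈ D := by
    simp [span_le, Set.insert_subset_iff]
  have hline : ∀ c : V, finrank K (K ∙ c) ≤ 1 := fun c => by
    simpa using finrank_span_le_card (R := K) ({c} : Set V)
  constructor
  · rintro rfl
    refine ⟨hspan_le.mp le_rfl |>.1, hspan_le.mp le_rfl |>.2, fun ha => ?_, fun hb => ?_⟩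
    · rw [ha, span_insert_zero] at hD
      exact absurd (hline b) (by omega)
    · rw [Set.pair_comm, span_insert_eq_span hb] at hD
      exact absurd (hline a) (by omega)
  · rintro ⟨ha, hb, ha0, hba⟩
    refine eq_of_le_of_finrank_le (hspan_le.mpr ⟨ha, hb⟩) ?_
    have hlt : K ∙ a < span K {a, b} :=
      lt_of_le_of_ne (span_mono (by simp)) fun h => hba (h ▸ mem_span_of_mem (by simp))
    have := finrank_lt_finrank_of_lt hlt
    rw [finrank_span_singleton ha0] at this
    omega


lemma finrank_inf_of_finrank_eq_one {D : Submodule K V} (hD : finrank K D = 1)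
    (C : Submodule K V) : finrank K ↥(D ⊓ C) = if D ≤ C then 1 else 0 := by
  have hle : finrank K ↥(D ⊓ C) ≤ 1 := hD ▸ finrank_mono inf_le_left
  split_ifs with h
  · rwa [le_iff_finrank_inf_eq.mp h]
  · rw [le_iff_finrank_inf_eq, hD] at h
    omega

lemma finrank_inf_eq_zero_iff_ne {L₁ L₂ : Submodule K V} (h₁ : finrank K L₁ = 1)
    (h₂ : finrank K L₂ = 1) : finrank K ↥(L₁ ⊓ L₂) = 0 ↔ L₁ ≠ L₂ := by
  rw [finrank_inf_of_finrank_eq_one h₁, ite_eq_right_iff, imp_iff_not one_ne_zero]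
  refine ⟨fun hle heq => hle heq.le, fun hne hle => hne (eq_of_le_of_finrank_eq hle ?_)⟩
  rw [h₁, h₂]

lemma sup_eq_of_ne_of_finrank_eq_two {L₁ L₂ D : Submodule K V} (h₁ : finrank K L₁ = 1)
    (h₂ : finrank K L₂ = 1) (hD : finrank K D = 2) (hL₁ : L₁ ≤ D) (hL₂ : L₂ ≤ D)
    (hne : L₁ ≠ L₂) : L₁ ⊔ L₂ = D := by
  refine eq_of_le_of_finrank_eq (sup_le hL₁ hL₂) ?_
  have := finrank_sup_add_finrank_inf_eq L₁ L₂
  rw [(finrank_inf_eq_zero_iff_ne h₁ h₂).mpr hne, h₁, h₂] at this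
  omega

lemma le_sup_and_inf_ne_iff {C₁ C₂ D : Submodule K V} (hD : finrank K D = 2)
    (h₁ : finrank K ↥(D ⊓ C₁) = 1) (h₂ : finrank K ↥(D ⊓ C₂) = 1) :
    D ≤ C₁ ⊔ C₂ ∧ D ⊓ C₁ ≠ D ⊓ C₂ ↔ finrank K ↥(D ⊓ (C₁ ⊓ C₂)) = 0 := by
  rw [inf_inf_distrib_left, finrank_inf_eq_zero_iff_ne h₁ h₂]
  refine ⟨And.right, fun hne => ⟨?_, hne⟩⟩
  rw [← sup_eq_of_ne_of_finrank_eq_two h₁ h₂ hD inf_le_left inf_le_left hne]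
  exact sup_le_sup inf_le_right inf_le_right

end LinearAlgebra

lemma plane_count_identity (q : ℂ) {d₁ d₂ e : ℕ} (h₁ : d₁ ≤ 2) (h₂ : d₂ ≤ 2) (he₁ : e ≤ d₁)
    (he₂ : e ≤ d₂) (hd₁ : d₁ = 2 → e = d₂) (hd₂ : d₂ = 2 → e = d₁) :
    (q ^ d₁ - 1) * (q ^ d₂ - 1) - (q ^ e - 1) * (q - 1)
      = (q ^ 2 - 1) * (q ^ 2 - q) * (if e = 2 then 1 else 0)
        + q * (q - 1) ^ 2 * ((if d₁ = 2 ∧ e = 1 then 1 else 0) + (if d₂ = 2 ∧ e = 1 then 1 else 0))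
        + (q - 1) ^ 2 * (if d₁ = 1 ∧ d₂ = 1 ∧ e = 0 then 1 else 0) := by
  interval_cases d₁ <;> interval_cases d₂ <;> interval_cases e <;> simp_all <;> ring

section PairCount

variable {K V : Type*} [Field K] [AddCommGroup V] [Module K V] [Fintype V]

noncomputable instance : Fintype (Submodule K V) := Fintype.ofFinite _

noncomputable def vectors (W : Submodule K V) : Finset V := {x | x ∈ W}

@[simp] lemma mem_vectors {W : Submodule K V} {x : V} : x ∈ vectors W ↔ x ∈ W := by
  simp [vectors]

lemma card_vectors [Fintype K] (W : Submodule K V) :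
    #(vectors W) = Fintype.card K ^ finrank K W := by
  rw [vectors, ← Fintype.card_subtype]
  exact card_eq_pow_finrank

lemma card_vectors_erase_zero [Fintype K] (W : Submodule K V) :
    #((vectors W).erase 0) = Fintype.card K ^ finrank K W - 1 := by
  rw [card_erase_of_mem (by simp), card_vectors]

noncomputable def pairCount (C₁ C₂ D : Submodule K V) : ℕ :=
  #{p ∈ vectors C₁ ×ˢ vectors C₂ | span K {p.1, p.2} = D}

lemma pairCount_bot (C₁ C₂ : Submodule K V) : pairCount C₁ C₂ ⊥ = 1 := by
  rw [pairCount, card_eq_one]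
  refine ⟨(0, 0), ?_⟩
  ext ⟨a, b⟩
  simp only [mem_filter, mem_product, mem_vectors, span_eq_bot, Set.mem_insert_iff,
    Set.mem_singleton_iff, forall_eq_or_imp, forall_eq, mem_singleton, Prod.mk.injEq]
  constructor
  · exact fun h => h.2
  · rintro ⟨rfl, rfl⟩
    exact ⟨⟨zero_mem _, zero_mem _⟩, rfl, rfl⟩

lemma pairCount_eq_zero_of_two_lt_finrank (C₁ C₂ : Submodule K V) {D : Submodule K V}
    (hD : 2 < finrank K D) : pairCount C₁ C₂ D = 0 := by
  rw [pairCount, card_eq_zero, filter_eq_empty_iff]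
  rintro ⟨a, b⟩ - rfl
  exact (finrank_span_pair_le a b).not_gt hD

lemma pairCount_add_one_of_finrank_eq_one [Fintype K] (C₁ C₂ : Submodule K V)
    {D : Submodule K V} (hD : finrank K D = 1) :
    pairCount C₁ C₂ D + 1 =
      Fintype.card K ^ finrank K ↥(D ⊓ C₁) * Fintype.card K ^ finrank K ↥(D ⊓ C₂) := by
  have hpairs : {p ∈ vectors C₁ ×ˢ vectors C₂ | span K {p.1, p.2} = D}
      = (vectors (D ⊓ C₁) ×ˢ vectors (D ⊓ C₂)).erase 0 := by
    ext ⟨a, b⟩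
    simp only [mem_filter, mem_product, mem_vectors, span_pair_eq_iff_of_finrank_eq_one hD,
      mem_erase, Submodule.mem_inf]
    tauto
  rw [pairCount, hpairs, card_erase_add_one (by simp [Prod.zero_eq_mk]), card_product,
    card_vectors, card_vectors]


noncomputable def dependentPairs (C₁ C₂ : Submodule K V) : Finset (V × V) :=
  {p ∈ (vectors C₁).erase 0 ×ˢ (vectors C₂).erase 0 | p.2 ∈ K ∙ p.1}

lemma dependentPairs_eq_inf (C₁ C₂ : Submodule K V) :
    dependentPairs C₁ C₂ = dependentPairs (C₁ ⊓ C₂) (C₁ ⊓ C₂) := by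
  ext ⟨a, b⟩
  simp only [dependentPairs, mem_filter, mem_product, mem_erase, mem_vectors, Submodule.mem_inf]
  constructor
  · rintro ⟨⟨⟨ha0, ha⟩, hb0, hb⟩, hba⟩
    obtain ⟨c, rfl⟩ := mem_span_singleton.mp hba
    have hc : c ≠ 0 := by rintro rfl; simp at hb0
    refine ⟨⟨⟨ha0, ha, ?_⟩, hb0, ?_, hb⟩, mem_span_singleton.mpr ⟨c, rfl⟩⟩
    · simpa [smul_smul, hc] using C₂.smul_mem c⁻¹ hb
    · exact C₁.smul_mem c ha
  · rintro ⟨⟨⟨ha0, ha, -⟩, hb0, -, hb⟩, hba⟩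
    exact ⟨⟨⟨ha0, ha⟩, hb0, hb⟩, hba⟩

lemma card_dependentPairs_self [Fintype K] (E : Submodule K V) :
    #(dependentPairs E E) = (Fintype.card K ^ finrank K E - 1) * (Fintype.card K - 1) := by
  have hfiber : ∀ a ∈ (vectors E).erase 0,
      #{b ∈ (vectors E).erase 0 | b ∈ K ∙ a} = Fintype.card K - 1 := by
    intro a ha
    obtain ⟨ha0, ha⟩ := mem_erase.mp ha
    have hline : K ∙ a ≤ E := (span_singleton_le_iff_mem a E).mpr (mem_vectors.mp ha)
    rw [show {b ∈ (vectors E).erase 0 | b ∈ K ∙ a} = (vectors (K ∙ a)).erase 0 by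
        ext b; simp only [mem_filter, mem_erase, mem_vectors]
        exact ⟨fun h => ⟨h.1.1, h.2⟩, fun h => ⟨⟨h.1, hline h.2⟩, h.2⟩⟩,
      card_vectors_erase_zero, finrank_span_singleton ha0, pow_one]
  rw [dependentPairs, card_filter, sum_product, sum_congr rfl fun a ha => (card_filter _ _).symm,
    sum_congr rfl hfiber, sum_const, smul_eq_mul, card_vectors_erase_zero]


/-- A pair of nonzero vectors of the plane `D` spans `D` unless it is dependent, and dependent
pairs from `C₁ × C₂` lie in `C₁ ⊓ C₂`. -/
lemma pairCount_add_of_finrank_eq_two [Fintype K] (C₁ C₂ : Submodule K V)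
    {D : Submodule K V} (hD : finrank K D = 2) :
    pairCount C₁ C₂ D + (Fintype.card K ^ finrank K ↥(D ⊓ (C₁ ⊓ C₂)) - 1) * (Fintype.card K - 1)
      = (Fintype.card K ^ finrank K ↥(D ⊓ C₁) - 1) *
          (Fintype.card K ^ finrank K ↥(D ⊓ C₂) - 1) := by
  set P := (vectors (D ⊓ C₁)).erase 0 ×ˢ (vectors (D ⊓ C₂)).erase 0
  have hspanning : {p ∈ vectors C₁ ×ˢ vectors C₂ | span K {p.1, p.2} = D}
      = {p ∈ P | p.2 ∉ K ∙ p.1} := by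
    ext ⟨a, b⟩
    simp only [P, mem_filter, mem_product, mem_erase, mem_vectors, Submodule.mem_inf,
      span_pair_eq_iff_of_finrank_eq_two hD]
    constructor
    · rintro ⟨⟨ha, hb⟩, haD, hbD, ha0, hba⟩
      exact ⟨⟨⟨ha0, haD, ha⟩, fun hb0 => hba (hb0 ▸ zero_mem _), hbD, hb⟩, hba⟩
    · rintro ⟨⟨⟨ha0, haD, ha⟩, -, hbD, hb⟩, hba⟩
      exact ⟨⟨ha, hb⟩, haD, hbD, ha0, hba⟩
  have hdependent : #(dependentPairs (D ⊓ C₁) (D ⊓ C₂))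
      = (Fintype.card K ^ finrank K ↥(D ⊓ (C₁ ⊓ C₂)) - 1) * (Fintype.card K - 1) := by
    rw [dependentPairs_eq_inf, ← inf_inf_distrib_left, card_dependentPairs_self]
  rw [pairCount, hspanning, ← hdependent, dependentPairs, add_comm,
    card_filter_add_card_filter_not, card_product, card_vectors_erase_zero,
    card_vectors_erase_zero]

end PairCount

section Coefficient

variable {K V : Type*} [Field K] [Fintype K] [AddCommGroup V] [Module K V] [Fintype V]

/-- The coefficient of `X ^ (N - suppWt D) * Y ^ suppWt D` on the right-hand side of the
decomposition, with `q` the size of the field. -/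
noncomputable def decompositionCoeff (q : ℂ) (C₁ C₂ D : Submodule K V) : ℂ :=
  (if D = ⊥ then 1 else 0)
    + (q - 1) * ((if D ≤ C₁ ∧ finrank K D = 1 then 1 else 0)
      + (if D ≤ C₂ ∧ finrank K D = 1 then 1 else 0))
    + (q - 1) ^ 2 * (if D ≤ C₁ ⊓ C₂ ∧ finrank K D = 1 then 1 else 0)
    + (q ^ 2 - 1) * (q ^ 2 - q) * (if D ≤ C₁ ⊓ C₂ ∧ finrank K D = 2 then 1 else 0)
    + q * (q - 1) ^ 2 *
        ((if D ≤ C₁ ∧ finrank K D = 2 ∧ finrank K ↥(D ⊓ (C₁ ⊓ C₂)) = 1 then 1 else 0)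
          + (if D ≤ C₂ ∧ finrank K D = 2 ∧ finrank K ↥(D ⊓ (C₁ ⊓ C₂)) = 1 then 1 else 0))
    + (q - 1) ^ 2 *
        (if D ≤ C₁ ⊔ C₂ ∧ finrank K D = 2 ∧ ¬ D ≤ C₁ ∧ ¬ D ≤ C₂ ∧ finrank K ↥(D ⊓ C₁) = 1 ∧
            finrank K ↥(D ⊓ C₂) = 1 ∧ D ⊓ C₁ ≠ D ⊓ C₂ then 1 else 0)

lemma pairCount_eq_decompositionCoeff_of_finrank_eq_one (C₁ C₂ : Submodule K V)
    {D : Submodule K V} (hD : finrank K D = 1) :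
    (pairCount C₁ C₂ D : ℂ) = decompositionCoeff (Fintype.card K) C₁ C₂ D := by
  have hcount := congrArg (Nat.cast : ℕ → ℂ) (pairCount_add_one_of_finrank_eq_one C₁ C₂ hD)
  have hbot : D ≠ ⊥ := by rintro rfl; simp at hD
  rw [finrank_inf_of_finrank_eq_one hD, finrank_inf_of_finrank_eq_one hD] at hcount
  simp only [decompositionCoeff, hbot, hD, le_inf_iff]
  by_cases h₁ : D ≤ C₁ <;> by_cases h₂ : D ≤ C₂ <;>
    simp [h₁, h₂] at hcount ⊢ <;> linear_combination hcount

lemma pairCount_eq_decompositionCoeff_of_finrank_eq_two (C₁ C₂ : Submodule K V)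
    {D : Submodule K V} (hD : finrank K D = 2) :
    (pairCount C₁ C₂ D : ℂ) = decompositionCoeff (Fintype.card K) C₁ C₂ D := by
  have hcount := congrArg (Nat.cast : ℕ → ℂ) (pairCount_add_of_finrank_eq_two C₁ C₂ hD)
  have hbot : D ≠ ⊥ := by rintro rfl; simp at hD
  set d₁ := finrank K ↥(D ⊓ C₁) with hd₁
  set d₂ := finrank K ↥(D ⊓ C₂) with hd₂
  set e := finrank K ↥(D ⊓ (C₁ ⊓ C₂)) with he
  have hq : 1 ≤ Fintype.card K := Fintype.card_pos
  push_cast [Nat.cast_sub hq, Nat.cast_sub (Nat.one_le_pow _ _ hq)] at hcount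
  have hle : ∀ C : Submodule K V, D ≤ C ↔ finrank K ↥(D ⊓ C) = 2 := fun _ =>
    hD ▸ le_iff_finrank_inf_eq
  have hdistinct : (D ≤ C₁ ⊔ C₂ ∧ finrank K D = 2 ∧ ¬ D ≤ C₁ ∧ ¬ D ≤ C₂ ∧ d₁ = 1 ∧ d₂ = 1 ∧
      D ⊓ C₁ ≠ D ⊓ C₂) ↔ d₁ = 1 ∧ d₂ = 1 ∧ e = 0 := by
    rw [hle C₁, hle C₂]
    constructor
    · rintro ⟨hsup, -, -, -, h₁, h₂, hne⟩
      exact ⟨h₁, h₂, (le_sup_and_inf_ne_iff hD h₁ h₂).mp ⟨hsup, hne⟩⟩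
    · rintro ⟨h₁, h₂, h₀⟩
      obtain ⟨hsup, hne⟩ := (le_sup_and_inf_ne_iff hD h₁ h₂).mpr h₀
      exact ⟨hsup, hD, by omega, by omega, h₁, h₂, hne⟩
  have hinf₁ : D ≤ C₁ → e = d₂ := fun h => by rw [he, ← inf_assoc, inf_eq_left.mpr h]
  have hinf₂ : D ≤ C₂ → e = d₁ := fun h => by rw [he, inf_comm C₁, ← inf_assoc, inf_eq_left.mpr h]
  have hd₁_le : d₁ ≤ 2 := hD ▸ finrank_mono inf_le_left
  have hd₂_le : d₂ ≤ 2 := hD ▸ finrank_mono inf_le_left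
  have he₁ : e ≤ d₁ := finrank_mono (inf_le_inf_left D inf_le_left)
  have he₂ : e ≤ d₂ := finrank_mono (inf_le_inf_left D inf_le_right)
  rw [decompositionCoeff, if_congr hdistinct rfl rfl]
  simp only [hbot, hD, hle, ← hd₁, ← hd₂, ← he, if_false, OfNat.ofNat_ne_one, and_false,
    and_true, true_and, zero_add, mul_zero, add_zero]
  rw [eq_sub_of_add_eq hcount, plane_count_identity _ hd₁_le hd₂_le he₁ he₂
    (fun h => hinf₁ ((hle C₁).mpr h)) (fun h => hinf₂ ((hle C₂).mpr h))]

lemma pairCount_eq_decompositionCoeff (C₁ C₂ D : Submodule K V) :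
    (pairCount C₁ C₂ D : ℂ) = decompositionCoeff (Fintype.card K) C₁ C₂ D := by
  obtain hD | hD | hD | hD : finrank K D = 0 ∨ finrank K D = 1 ∨ finrank K D = 2 ∨
      2 < finrank K D := by omega
  · rw [Submodule.finrank_eq_zero.mp hD, pairCount_bot]
    simp [decompositionCoeff]
  · exact pairCount_eq_decompositionCoeff_of_finrank_eq_one C₁ C₂ hD
  · exact pairCount_eq_decompositionCoeff_of_finrank_eq_two C₁ C₂ hD
  · have hbot : D ≠ ⊥ := by rintro rfl; simp at hD
    rw [pairCount_eq_zero_of_two_lt_finrank C₁ C₂ hD]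
    simp [decompositionCoeff, hbot, hD.ne', (one_lt_two.trans hD).ne']

end Coefficient

section Hamming

variable {N : ℕ}

lemma suppWt_span (S : Set (Fin N → Fq)) :
    suppWt (span Fq S) = #{j | ∃ v ∈ S, v j ≠ 0} := by
  rw [suppWt]
  congr 1
  refine filter_congr fun j _ => ⟨?_, fun ⟨v, hv, hvj⟩ => ⟨v, subset_span hv, hvj⟩⟩
  contrapose!
  intro h v hv
  exact (span_le (p := LinearMap.ker (LinearMap.proj j)) |>.mpr h) hv

lemma effLen_eq_suppWt_span {m : ℕ} (c : Fin m → Fin N → Fq) :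
    effLen c = suppWt (span Fq (Set.range c)) := by
  simp [effLen, suppWt_span]

lemma Wm_pair_eq_sum_pairCount (C₁ C₂ : Submodule Fq (Fin N → Fq)) (X Y : ℂ) :
    Wm ![C₁, C₂] X Y = ∑ D, (pairCount C₁ C₂ D : ℂ) * (X ^ (N - suppWt D) * Y ^ suppWt D) := by
  set f : Submodule Fq (Fin N → Fq) → ℂ := fun D => X ^ (N - suppWt D) * Y ^ suppWt D
  have hpairs : Wm ![C₁, C₂] X Y = ∑ p ∈ vectors C₁ ×ˢ vectors C₂, f (span Fq {p.1, p.2}) := by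
    rw [Wm, ← (piFinTwoEquiv _).symm.sum_comp, Fintype.sum_prod_type, sum_product,
      sum_subtype (vectors C₁) (p := (· ∈ C₁)) fun _ => mem_vectors]
    refine Fintype.sum_congr _ _ fun a => ?_
    rw [sum_subtype (vectors C₂) (p := (· ∈ C₂)) fun _ => mem_vectors]
    refine Fintype.sum_congr _ _ fun b => ?_
    have hrange : Set.range (fun i => ((piFinTwoEquiv fun i => ↥(![C₁, C₂] i)).symm (a, b) i :
          Fin N → Fq))
        = {(a : Fin N → Fq), (b : Fin N → Fq)} := by
      ext v
      simp only [Set.mem_range, Fin.exists_fin_two, Set.mem_insert_iff, Set.mem_singleton_iff,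
        eq_comm (a := v)]
      exact Iff.rfl
    simp only [f, effLen_eq_suppWt_span, hrange]
  rw [hpairs, ← sum_fiberwise_of_maps_to (t := univ) (g := fun p => span Fq {p.1, p.2})
    (fun _ _ => mem_univ _)]
  refine sum_congr rfl fun D _ => ?_
  rw [sum_congr rfl fun p hp => congrArg f (mem_filter.mp hp).2, sum_const, nsmul_eq_mul,
    pairCount]

end Hamming

theorem two_tuple_decomposition_general {N : ℕ}
    (C1 C2 : Submodule Fq (Fin N → Fq)) (X Y : ℂ) :
    Wm ![C1, C2] X Y
      = X ^ N
        + ((Fintype.card Fq : ℂ) - 1) * (Wr C1 1 X Y + Wr C2 1 X Y)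
        + ((Fintype.card Fq : ℂ) - 1) ^ 2 * Wr (C1 ⊓ C2) 1 X Y
        + ((Fintype.card Fq : ℂ) ^ 2 - 1) * ((Fintype.card Fq : ℂ) ^ 2 - (Fintype.card Fq : ℂ)) *
            Wr (C1 ⊓ C2) 2 X Y
        + (Fintype.card Fq : ℂ) * ((Fintype.card Fq : ℂ) - 1) ^ 2 *
            ((∑ᶠ D ∈ {D : Submodule Fq (Fin N → Fq) | D ≤ C1 ∧ Module.finrank Fq D = 2 ∧
                Module.finrank Fq ↥(D ⊓ (C1 ⊓ C2)) = 1}, X ^ (N - suppWt D) * Y ^ suppWt D)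
              + ∑ᶠ D ∈ {D : Submodule Fq (Fin N → Fq) | D ≤ C2 ∧ Module.finrank Fq D = 2 ∧
                Module.finrank Fq ↥(D ⊓ (C1 ⊓ C2)) = 1}, X ^ (N - suppWt D) * Y ^ suppWt D)
        + ((Fintype.card Fq : ℂ) - 1) ^ 2 *
            ∑ᶠ D ∈ {D : Submodule Fq (Fin N → Fq) | D ≤ C1 ⊔ C2 ∧ Module.finrank Fq D = 2 ∧
                ¬ D ≤ C1 ∧ ¬ D ≤ C2 ∧ Module.finrank Fq ↥(D ⊓ C1) = 1 ∧
                Module.finrank Fq ↥(D ⊓ C2) = 1 ∧ D ⊓ C1 ≠ D ⊓ C2},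
              X ^ (N - suppWt D) * Y ^ suppWt D := by
  rw [Wm_pair_eq_sum_pairCount]
  simp only [pairCount_eq_decompositionCoeff, decompositionCoeff, Wr,
    finsum_mem_setOf_eq_sum_boole_mul, add_mul, mul_assoc, sum_add_distrib, ← mul_sum]
  have hbot : ∑ D : Submodule Fq (Fin N → Fq),
      (if D = ⊥ then 1 else 0) * (X ^ (N - suppWt D) * Y ^ suppWt D) = X ^ N := by
    simp [suppWt]
  rw [hbot]

theorem two_tuple_decomposition {N k l s : ℕ}
    (C1 C2 : Submodule Fq (Fin N → Fq))
    (hk : Module.finrank Fq C1 = k) (hl : Module.finrank Fq C2 = l)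
    (hs : Module.finrank Fq ↥(C1 ⊓ C2) = s) (X Y : ℂ) :
    Wm ![C1, C2] X Y
      = X ^ N
        + ((Fintype.card Fq : ℂ) - 1) * (Wr C1 1 X Y + Wr C2 1 X Y)
        + ((Fintype.card Fq : ℂ) - 1) ^ 2 * Wr (C1 ⊓ C2) 1 X Y
        + ((Fintype.card Fq : ℂ) ^ 2 - 1) * ((Fintype.card Fq : ℂ) ^ 2 - (Fintype.card Fq : ℂ)) *
            Wr (C1 ⊓ C2) 2 X Y
        + (Fintype.card Fq : ℂ) * ((Fintype.card Fq : ℂ) - 1) ^ 2 *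
            ((∑ᶠ D ∈ {D : Submodule Fq (Fin N → Fq) | D ≤ C1 ∧ Module.finrank Fq D = 2 ∧
                Module.finrank Fq ↥(D ⊓ (C1 ⊓ C2)) = 1}, X ^ (N - suppWt D) * Y ^ suppWt D)
              + ∑ᶠ D ∈ {D : Submodule Fq (Fin N → Fq) | D ≤ C2 ∧ Module.finrank Fq D = 2 ∧
                Module.finrank Fq ↥(D ⊓ (C1 ⊓ C2)) = 1}, X ^ (N - suppWt D) * Y ^ suppWt D)
        + ((Fintype.card Fq : ℂ) - 1) ^ 2 *
            ∑ᶠ D ∈ {D : Submodule Fq (Fin N → Fq) | D ≤ C1 ⊔ C2 ∧ Module.finrank Fq D = 2 ∧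
                ¬ D ≤ C1 ∧ ¬ D ≤ C2 ∧ Module.finrank Fq ↥(D ⊓ C1) = 1 ∧
                Module.finrank Fq ↥(D ⊓ C2) = 1 ∧ D ⊓ C1 ≠ D ⊓ C2},
              X ^ (N - suppWt D) * Y ^ suppWt D :=
  two_tuple_decomposition_general C1 C2 X Y
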